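/- arXiv:1811.07703 — 8 statements merged into one kernel-verified Lean document; each statement's English description precedes it below -/
import Mathlib

section
/- Let p,q be complex numbers with pq ≠ 1 and (p,q) ≠ (1/2,1/2). Define F(z) = ((1-q)(2p-1)z + (1-p)(1-2q)) / ((1-p)(2q-1)z + (p-q)). Then F maps the upper half plane into the upper half plane if and only if either p = q, or (p-1)(2q-1)/(p-q) lies in ℝ ∪ {w : Im w > 0}. -/
private lemma im_formula (w z : ℂ) :
    (((1 - w) * z + w) / (1 - w * z)).im =
      (z.im * (1 - w.re + w.re ^ 2 + w.im ^ 2) +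
        w.im * (z.re ^ 2 - z.re + z.im ^ 2 + 1)) / Complex.normSq (1 - w * z) := by
  rw [Complex.div_im, div_sub_div_same]
  congr 1
  simp only [Complex.add_im, Complex.add_re, Complex.mul_im, Complex.mul_re,
    Complex.sub_re, Complex.sub_im, Complex.one_re, Complex.one_im]
  ring

private lemma main_iff (w : ℂ) :
    (∀ z : ℂ, 0 < z.im → 0 < (((1 - w) * z + w) / (1 - w * z)).im) ↔ 0 ≤ w.im := by
  constructor
  · intro h
    by_contra hv
    push_neg at hv
    have hcpos : (0:ℝ) < 1 - w.re + w.re ^ 2 + w.im ^ 2 := by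
      nlinarith [sq_nonneg (2 * w.re - 1), sq_nonneg w.im]
    set c := 1 - w.re + w.re ^ 2 + w.im ^ 2 with hc
    set y := (c + 1) / (-w.im) with hy
    have hypos : 0 < y := div_pos (by linarith) (by linarith)
    have hvne : w.im ≠ 0 := ne_of_lt hv
    have hvy : w.im * y = -(c + 1) := by
      rw [hy, div_neg, mul_neg, ← mul_div_assoc, mul_div_cancel_left₀ _ hvne]
    have hz := h ⟨0, y⟩ (by simpa using hypos)
    rw [im_formula] at hz
    simp only [Complex.ofReal_im, Complex.ofReal_re] at hz
    have hnum : (Complex.mk 0 y).im * (1 - w.re + w.re ^ 2 + w.im ^ 2) +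
        w.im * ((Complex.mk 0 y).re ^ 2 - (Complex.mk 0 y).re + (Complex.mk 0 y).im ^ 2 + 1) < 0 := by
      show y * c + w.im * ((0:ℝ) ^ 2 - 0 + y ^ 2 + 1) < 0
      nlinarith [hvy, hypos, hv]
    exact absurd hz (not_lt.mpr
      (div_nonpos_of_nonpos_of_nonneg (le_of_lt hnum) (Complex.normSq_nonneg _)))
  · intro hv z hz
    have hden : 1 - w * z ≠ 0 := by
      intro h
      have h1 : w * z = 1 := by
        have := sub_eq_zero.mp h; exact this.symm
      have hre : w.re * z.re - w.im * z.im = 1 := by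
        have := congrArg Complex.re h1; simpa [Complex.mul_re] using this
      have him : w.re * z.im + w.im * z.re = 0 := by
        have := congrArg Complex.im h1; simpa [Complex.mul_im] using this
      have e1 : w.re * z.re * z.im - w.im * z.im ^ 2 = z.im := by
        linear_combination z.im * hre
      have e2 : w.re * z.im * z.re + w.im * z.re ^ 2 = 0 := by
        linear_combination z.re * him
      nlinarith [mul_nonneg hv (sq_nonneg z.re), mul_nonneg hv (sq_nonneg z.im)]
    rw [im_formula]
    apply div_pos
    · have h75 : (0:ℝ) < 1 - w.re + w.re ^ 2 + w.im ^ 2 := by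
        nlinarith [sq_nonneg (2 * w.re - 1), sq_nonneg w.im]
      have h76 : (0:ℝ) ≤ z.re ^ 2 - z.re + z.im ^ 2 + 1 := by
        nlinarith [sq_nonneg (2 * z.re - 1), sq_nonneg z.im]
      nlinarith [mul_pos hz h75, mul_nonneg hv h76]
    · exact Complex.normSq_pos.mpr hden

theorem stmt_0 (p q : ℂ) (h1 : p * q ≠ 1) (h2 : (p, q) ≠ ((1:ℂ)/2, (1:ℂ)/2)) :
    (∀ z : ℂ, 0 < z.im →
      0 < (((1 - q) * (2 * p - 1) * z + (1 - p) * (1 - 2 * q)) /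
            ((1 - p) * (2 * q - 1) * z + (p - q))).im) ↔
    (p = q ∨ ((p - 1) * (2 * q - 1) / (p - q)).im = 0 ∨
      0 < ((p - 1) * (2 * q - 1) / (p - q)).im) := by
  by_cases hpq : p = q
  · subst hpq
    refine iff_of_true ?_ (Or.inl rfl)
    intro z hz
    have hp1 : p ≠ 1 := by
      intro h; apply h1; rw [h]; ring
    have hp2 : p ≠ 1 / 2 := by
      intro h; exact h2 (by rw [h])
    have hc : (1 - p) * (2 * p - 1) ≠ 0 := by
      apply mul_ne_zero
      · exact sub_ne_zero.mpr (Ne.symm hp1)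
      · intro h
        apply hp2
        have : 2 * p = 1 := by linear_combination h
        field_simp
        linear_combination this
    have hzne : z ≠ 0 := by
      intro h; rw [h] at hz; simp at hz
    have heq : ((1 - p) * (2 * p - 1) * z + (1 - p) * (1 - 2 * p)) /
        ((1 - p) * (2 * p - 1) * z + (p - p)) =
        ((1 - p) * (2 * p - 1) * (z - 1)) / ((1 - p) * (2 * p - 1) * z) := by
      congr 1 <;> ring
    rw [heq, mul_div_mul_left _ _ hc, Complex.div_im]
    have hns : 0 < Complex.normSq z := Complex.normSq_pos.mpr hzne
    have : (z - 1).im * z.re / Complex.normSq z - (z - 1).re * z.im / Complex.normSq z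
        = z.im / Complex.normSq z := by
      rw [div_sub_div_same]
      congr 1
      simp only [Complex.sub_im, Complex.sub_re, Complex.one_im, Complex.one_re]
      ring
    rw [this]
    exact div_pos hz hns
  · have hd : p - q ≠ 0 := sub_ne_zero.mpr hpq
    set w := (p - 1) * (2 * q - 1) / (p - q) with hw
    have hwd : w * (p - q) = (p - 1) * (2 * q - 1) := div_mul_cancel₀ _ hd
    have key : ∀ z : ℂ, ((1 - q) * (2 * p - 1) * z + (1 - p) * (1 - 2 * q)) /
        ((1 - p) * (2 * q - 1) * z + (p - q)) = ((1 - w) * z + w) / (1 - w * z) := by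
      intro z
      have hnum : (1 - q) * (2 * p - 1) * z + (1 - p) * (1 - 2 * q) =
          (p - q) * (((1 - w) * z + w)) := by linear_combination (z - 1) * hwd
      have hden2 : (1 - p) * (2 * q - 1) * z + (p - q) = (p - q) * (1 - w * z) := by
        linear_combination z * hwd
      rw [hnum, hden2, mul_div_mul_left _ _ hd]
    have hiff : (∀ z : ℂ, 0 < z.im →
        0 < (((1 - q) * (2 * p - 1) * z + (1 - p) * (1 - 2 * q)) /
          ((1 - p) * (2 * q - 1) * z + (p - q))).im) ↔ 0 ≤ w.im := by
      rw [← main_iff w]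
      constructor <;> intro h z hz
      · rw [← key]; exact h z hz
      · rw [key]; exact h z hz
    rw [hiff]
    simp only [hpq, false_or, ← hw]
    rw [le_iff_lt_or_eq]
    tauto
end

section
/- Let a,b,c ∈ ℂ with a, b, c distinct, and set p = (c-a)/(b-a), q = (a-c)/(b-c) (assuming pq ≠ 1). Then S_{p,q}(a,b,c) = (a,c,b). -/
set_option maxHeartbeats 1000000 in

theorem stmt_5 (a b c : ℂ) (hab : a ≠ b) (hbc : b ≠ c) (hac : a ≠ c)
    (p q : ℂ) (hp : p = (c - a) / (b - a)) (hq : q = (a - c) / (b - c))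
    (h : p * q ≠ 1) :
    p * (1 - q) / (1 - p * q) * a + q * (1 - p) / (1 - p * q) * b
        + (1 - p) * (1 - q) / (1 - p * q) * c = a ∧
    p * (1 - q) / (1 - p * q) * b + q * (1 - p) / (1 - p * q) * c
        + (1 - p) * (1 - q) / (1 - p * q) * a = c ∧
    p * (1 - q) / (1 - p * q) * c + q * (1 - p) / (1 - p * q) * a
        + (1 - p) * (1 - q) / (1 - p * q) * b = b := by
  have hba : b - a ≠ 0 := sub_ne_zero.mpr hab.symm
  have hbc' : b - c ≠ 0 := sub_ne_zero.mpr hbc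
  have hpq : 1 - p * q ≠ 0 := sub_ne_zero.mpr (Ne.symm h)
  have key : 1 - p * q
      = ((b - a) * (b - c) - (c - a) * (a - c)) / ((b - a) * (b - c)) := by
    subst hp hq
    field_simp
  have hN : (b - a) * (b - c) - (c - a) * (a - c) ≠ 0 := by
    intro h0
    apply hpq
    rw [key, h0, zero_div]
  subst hp hq
  rw [key]
  refine ⟨?_, ?_, ?_⟩ <;> field_simp <;> ring
end

section
/- Define p(y,y') = (1+y+y')/(2-ωy-ω²y') and q(y,y') = (1+ωy+ω²y')/(2-y-y') with ω = e^{2πi/3}. Then for any p,q ∈ ℂ with pq ≠ 1 such that all expressions are defined, setting η = ((p-q)+(p-1)(2q-1)ω)/(1-pq) and η' = ((p-q)+(p-1)(2q-1)ω²)/(1-pq), one has p(η,η') = p and q(η,η') = q. -/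
theorem stmt_9 (p q : ℂ) (h : p * q ≠ 1)
    (ω : ℂ) (hω : ω = Complex.exp (2 * Real.pi * Complex.I / 3))
    (η η' : ℂ)
    (hη : η = ((p - q) + (p - 1) * (2 * q - 1) * ω) / (1 - p * q))
    (hη' : η' = ((p - q) + (p - 1) * (2 * q - 1) * ω^2) / (1 - p * q))
    (hd1 : 2 - ω * η - ω^2 * η' ≠ 0) (hd2 : 2 - η - η' ≠ 0) :
    (1 + η + η') / (2 - ω * η - ω^2 * η') = p ∧
    (1 + ω * η + ω^2 * η') / (2 - η - η') = q := by
  have hpq : (1 : ℂ) - p * q ≠ 0 := sub_ne_zero.mpr (Ne.symm h)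
  have hprim := Complex.isPrimitiveRoot_exp 3 (by norm_num)
  norm_num at hprim
  rw [← hω] at hprim
  have hω2 : ω ^ 2 + ω + 1 = 0 := by
    have := hprim.geom_sum_eq_zero (by norm_num)
    simp [Finset.sum_range_succ] at this; linear_combination this
  subst hη hη'
  constructor
  · rw [div_eq_iff hd1]
    field_simp
    linear_combination ((-2*p*q + p + 2*p^2*q - p^2)*ω^2 + (2*p*q - p - 2*p^2*q + p^2)*ω
      + (-p*q - 2*q + 1 + 2*p^2*q)) * hω2
  · rw [div_eq_iff hd2]
    field_simp
    linear_combination ((2*p*q - p - 2*q + 1)*ω^2 + (-2*p*q + p + 2*q - 1)*ω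
      + (p*q + 2*p*q^2 - 2*q^2 - 2*q + 1)) * hω2
end

section
/- For N ≥ 1 and integer k with 0 ≤ k ≤ N, the number t = sin(πk/N)/sin(π(k/N + 1/3)) satisfies ψ(t)^N = 1, where ψ(t) = (1+ωt)/(1+ω²t), ω = e^{2πi/3}. -/
theorem stmt_14 (ω : ℂ) (hω : ω = Complex.exp (2 * Real.pi * Complex.I / 3))
    (N : ℕ) (hN : 1 ≤ N) (k : ℕ) (hk : k ≤ N)
    (t : ℝ) (ht : t = Real.sin (Real.pi * k / N) / Real.sin (Real.pi * (k / N + 1/3))) :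
    ((1 + ω * (t : ℂ)) / (1 + ω^2 * (t : ℂ)))^N = 1 := by
  have hN0 : (N : ℝ) ≠ 0 := Nat.cast_ne_zero.2 (by omega)
  have hs3 : ((Real.sqrt 3 : ℝ) : ℂ)^2 = 3 := by
    norm_cast
    exact Real.sq_sqrt (by norm_num)
  have hω' : ω = -1/2 + ((Real.sqrt 3 / 2 : ℝ) : ℂ) * Complex.I := by
    have h1 : (2 * (Real.pi:ℂ) * Complex.I / 3) = ((2 * Real.pi / 3 : ℝ) : ℂ) * Complex.I := by
      push_cast; ring
    rw [hω, h1, Complex.exp_mul_I, ← Complex.ofReal_cos, ← Complex.ofReal_sin]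
    have h2 : (2 * Real.pi / 3 : ℝ) = Real.pi - Real.pi / 3 := by ring
    rw [h2, Real.cos_pi_sub, Real.sin_pi_sub, Real.cos_pi_div_three, Real.sin_pi_div_three]
    push_cast; ring
  have hω2 : ω^2 = -1/2 - ((Real.sqrt 3 / 2 : ℝ) : ℂ) * Complex.I := by
    rw [hω']
    push_cast
    linear_combination (Complex.I^2/4) * hs3 + (3/4) * Complex.I_sq
  rw [ht]
  set θ : ℝ := Real.pi * k / N with hθ
  have hphi : Real.pi * ((k : ℝ) / N + 1/3) = θ + Real.pi/3 := by
    rw [hθ]; field_simp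
  rw [hphi]
  set s : ℝ := Real.sin (θ + Real.pi/3) with hs
  by_cases hs0 : s = 0
  · rw [hs0]
    simp
  · have hsC : (s : ℂ) ≠ 0 := Complex.ofReal_ne_zero.2 hs0
    have hsexp : s = Real.sin θ * (1/2) + Real.cos θ * (Real.sqrt 3 / 2) := by
      rw [hs, Real.sin_add, Real.sin_pi_div_three, Real.cos_pi_div_three]
    have key1 : (s : ℂ) + ω * (Real.sin θ : ℂ)
        = ((Real.sqrt 3 / 2 : ℝ) : ℂ) * Complex.exp (θ * Complex.I) := by
      rw [Complex.exp_mul_I, ← Complex.ofReal_cos, ← Complex.ofReal_sin, hω', hsexp]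
      push_cast
      ring
    have key2 : (s : ℂ) + ω^2 * (Real.sin θ : ℂ)
        = ((Real.sqrt 3 / 2 : ℝ) : ℂ) * Complex.exp (((-θ : ℝ) : ℂ) * Complex.I) := by
      rw [Complex.exp_mul_I, ← Complex.ofReal_cos, ← Complex.ofReal_sin, hω2, hsexp,
        Real.cos_neg, Real.sin_neg]
      push_cast
      ring
    have hc : ((Real.sqrt 3 / 2 : ℝ) : ℂ) ≠ 0 := Complex.ofReal_ne_zero.2 (by positivity)
    have e1 : (1 : ℂ) + ω * ((Real.sin θ / s : ℝ) : ℂ) = ((s:ℂ) + ω * Real.sin θ)/s := by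
      push_cast
      field_simp
    have e2 : (1 : ℂ) + ω^2 * ((Real.sin θ / s : ℝ) : ℂ) = ((s:ℂ) + ω^2 * Real.sin θ)/s := by
      push_cast
      field_simp
    have hrat : ((1 + ω * ((Real.sin θ / s : ℝ):ℂ)) / (1 + ω^2 * ((Real.sin θ / s : ℝ):ℂ)))
        = Complex.exp (2*θ*Complex.I) := by
      rw [e1, e2, div_div_div_comm, div_self hsC, div_one, key1, key2,
        mul_div_mul_left _ _ hc, ← Complex.exp_sub]
      congr 1
      push_cast
      ring
    rw [hrat, ← Complex.exp_nat_mul]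
    have : (N:ℂ) * (2*θ*Complex.I) = (k:ℂ) * (2*Real.pi*Complex.I) := by
      rw [hθ]
      have hN0' : (N : ℂ) ≠ 0 := Nat.cast_ne_zero.2 (by omega)
      push_cast
      field_simp
    rw [this]
    exact_mod_cast Complex.exp_int_mul_two_pi_mul_I (k:ℤ)
end

section
/- For a triangle triple Δ = (a,b,c) in ℂ with Fourier coefficients ψ₁ = (a + bω² + cω)/3, ψ₂ = (a + bω + cω²)/3, ω = e^{2πi/3}, the area of the triangle with vertices a, b, c equals (3√3/4)·| |ψ₁|² - |ψ₂|² |. -/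
set_option maxHeartbeats 1000000 in
theorem stmt_16 (ω : ℂ) (hω : ω = Complex.exp (2 * Real.pi * Complex.I / 3))
    (a b c : ℂ) :
    |((b - a) * (starRingEnd ℂ) (c - a)).im| / 2
      = 3 * Real.sqrt 3 / 4 *
        |‖(a + b * ω^2 + c * ω) / 3‖ ^ 2
          - ‖(a + b * ω + c * ω^2) / 3‖ ^ 2| := by
  have hs : Real.sqrt 3 ^ 2 = 3 := Real.sq_sqrt (by norm_num)
  have hωval : ω = (-1/2 : ℂ) + ((Real.sqrt 3 / 2 : ℝ) : ℂ) * Complex.I := by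
    have h1 : (2 * Real.pi * Complex.I / 3) = ((2 * Real.pi / 3 : ℝ) : ℂ) * Complex.I := by
      push_cast; ring
    rw [hω, h1, Complex.exp_mul_I, ← Complex.ofReal_cos, ← Complex.ofReal_sin]
    have hc : Real.cos (2 * Real.pi / 3) = -(1/2) := by
      have h : (2 * Real.pi / 3) = Real.pi - Real.pi / 3 := by ring
      rw [h, Real.cos_pi_sub, Real.cos_pi_div_three]
    have hsn : Real.sin (2 * Real.pi / 3) = Real.sqrt 3 / 2 := by
      have h : (2 * Real.pi / 3) = Real.pi - Real.pi / 3 := by ring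
      rw [h, Real.sin_pi_sub, Real.sin_pi_div_three]
    rw [hc, hsn]
    push_cast
    ring
  have habs : ∀ z : ℂ, ‖z / 3‖ ^ 2 = Complex.normSq z / 9 := by
    intro z
    rw [Complex.sq_norm, map_div₀]
    norm_num [Complex.normSq_apply]
  rw [habs, habs]
  have key : ((b - a) * (starRingEnd ℂ) (c - a)).im
      = -(3 * Real.sqrt 3 / 2) *
        (Complex.normSq (a + b * ω^2 + c * ω) / 9
          - Complex.normSq (a + b * ω + c * ω^2) / 9) := by
    rw [hωval]
    simp only [Complex.normSq_apply, Complex.add_re, Complex.add_im, Complex.mul_re,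
      Complex.mul_im, Complex.sub_re, Complex.sub_im, Complex.conj_re, Complex.conj_im,
      Complex.I_re, Complex.I_im, Complex.ofReal_re, Complex.ofReal_im, Complex.div_ofNat_re,
      Complex.div_ofNat_im, Complex.neg_re, Complex.neg_im, Complex.one_re, Complex.one_im, pow_two]
    linear_combination ((-1/96)*c.im^2*(Real.sqrt 3) + (-1/96)*c.im^2*(Real.sqrt 3)^3 + (-1/96)*c.re^2*(Real.sqrt 3) + (-1/96)*c.re^2*(Real.sqrt 3)^3 + (-1/3)*b.im*c.re + (-1/12)*b.im*c.re*(Real.sqrt 3)^2 + (1/96)*b.im^2*(Real.sqrt 3) + (1/96)*b.im^2*(Real.sqrt 3)^3 + (1/3)*b.re*c.im + (1/12)*b.re*c.im*(Real.sqrt 3)^2 + (1/96)*b.re^2*(Real.sqrt 3) + (1/96)*b.re^2*(Real.sqrt 3)^3 + (1/12)*a.im*c.im*(Real.sqrt 3) + (1/3)*a.im*c.re + (-1/12)*a.im*b.im*(Real.sqrt 3) + (-1/3)*a.im*b.re + (-1/3)*a.re*c.im + (1/12)*a.re*c.re*(Real.sqrt 3) + (1/3)*a.re*b.im + (-1/12)*a.re*b.re*(Real.sqrt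 3)) * hs
  rw [key, abs_mul, abs_neg, abs_of_nonneg (by positivity : (0:ℝ) ≤ 3 * Real.sqrt 3 / 2)]
  ring
end

section
/- For η, η' ∈ ℂ and a non-degenerate triangle triple Δ with Fourier coefficients ψ₁, ψ₂, the area ratio area(S[η,η'](Δ))/area(Δ) equals | |η'ψ₁|² - |ηψ₂|² | / | |ψ₁|² - |ψ₂|² |. Consequently S[η,η'] preserves the area of every triangle if and only if |η| = |η'| = 1. -/
noncomputable def omega0 : ℂ := Complex.exp (2 * Real.pi * Complex.I / 3)

/-- Area of the triangle with vertices `a`, `b`, `c`. -/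
noncomputable def triArea (a b c : ℂ) : ℝ := |((b - a) * (starRingEnd ℂ) (c - a)).im| / 2

noncomputable def psi1 (a b c : ℂ) : ℂ := (a + b * omega0^2 + c * omega0) / 3

noncomputable def psi2 (a b c : ℂ) : ℂ := (a + b * omega0 + c * omega0^2) / 3

/-- The operator `S[η,η']`: its Fourier transform acts by `diag(1, η', η)`. -/
noncomputable def Sop (η η' a b c : ℂ) : ℂ × ℂ × ℂ :=
  ((a + b + c) / 3 + η' * psi1 a b c + η * psi2 a b c,
   (a + b + c) / 3 + η' * psi1 a b c * omega0 + η * psi2 a b c * omega0^2,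
   (a + b + c) / 3 + η' * psi1 a b c * omega0^2 + η * psi2 a b c * omega0)

lemma omega0_val : omega0 = (((-1/2 : ℝ)) : ℂ) + ((Real.sqrt 3 / 2 : ℝ) : ℂ) * Complex.I := by
  have h : (2 * ↑Real.pi * Complex.I / 3) = ((2 * Real.pi / 3 : ℝ) : ℂ) * Complex.I := by
    push_cast; ring
  rw [omega0, h, Complex.exp_mul_I, ← Complex.ofReal_cos, ← Complex.ofReal_sin]
  have hc : Real.cos (2 * Real.pi / 3) = -1/2 := by
    have : 2 * Real.pi / 3 = Real.pi - Real.pi / 3 := by ring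
    rw [this, Real.cos_pi_sub, Real.cos_pi_div_three]; norm_num
  have hs : Real.sin (2 * Real.pi / 3) = Real.sqrt 3 / 2 := by
    have : 2 * Real.pi / 3 = Real.pi - Real.pi / 3 := by ring
    rw [this, Real.sin_pi_sub, Real.sin_pi_div_three]
  rw [hc, hs]

lemma omega0_cube : omega0 ^ 3 = 1 := by
  rw [omega0, ← Complex.exp_nat_mul]
  rw [show (3 : ℕ) * (2 * ↑Real.pi * Complex.I / 3) = 2 * ↑Real.pi * Complex.I by push_cast; ring]
  exact Complex.exp_two_pi_mul_I

lemma omega0_ne_one : omega0 ≠ 1 := by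
  intro h
  have h2 := congrArg Complex.im h
  rw [omega0_val] at h2
  simp only [Complex.add_im, Complex.mul_im, Complex.ofReal_re, Complex.ofReal_im,
    Complex.I_re, Complex.I_im, Complex.one_im] at h2
  have h3 : Real.sqrt 3 > 0 := Real.sqrt_pos.2 (by norm_num)
  linarith

lemma omega0_sum : 1 + omega0 + omega0 ^ 2 = 0 := by
  have h : (omega0 - 1) * (1 + omega0 + omega0 ^ 2) = 0 := by
    linear_combination omega0_cube
  rcases mul_eq_zero.1 h with h1 | h2
  · exact absurd (by linear_combination h1) omega0_ne_one
  · exact h2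

lemma sqrt3_sq : ((Real.sqrt 3 : ℝ) : ℂ) ^ 2 = 3 := by
  rw [← Complex.ofReal_pow, Real.sq_sqrt (by norm_num : (0:ℝ) ≤ 3)]; norm_num

lemma omega0_sq_val : omega0 ^ 2 = (((-1/2 : ℝ)) : ℂ) - ((Real.sqrt 3 / 2 : ℝ) : ℂ) * Complex.I := by
  rw [omega0_val]
  push_cast
  linear_combination (-1/4 : ℂ) * sqrt3_sq + (((Real.sqrt 3:ℝ):ℂ)^2/4) * Complex.I_sq

lemma keyIm (u v : ℂ) :
    ((u * (omega0 - 1) + v * (omega0 ^ 2 - 1)) *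
      (starRingEnd ℂ) (u * (omega0 ^ 2 - 1) + v * (omega0 - 1))).im
      = 3 * Real.sqrt 3 / 2 * (‖v‖ ^ 2 - ‖u‖ ^ 2) := by
  rw [omega0_sq_val, omega0_val, Complex.sq_norm, Complex.sq_norm, Complex.normSq_apply,
    Complex.normSq_apply]
  simp only [Complex.conj_re, Complex.conj_im, Complex.mul_im, Complex.mul_re,
    Complex.add_im, Complex.add_re, Complex.sub_im, Complex.sub_re, Complex.I_re,
    Complex.I_im, Complex.ofReal_re, Complex.ofReal_im, Complex.one_re, Complex.one_im]
  ring

lemma const_pos : (0:ℝ) < 3 * Real.sqrt 3 / 4 := by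
  have := Real.sqrt_pos.2 (by norm_num : (0:ℝ) < 3); linarith

lemma area_of_diffs (A B C : ℂ) (u v : ℂ)
    (h1 : B - A = u * (omega0 - 1) + v * (omega0 ^ 2 - 1))
    (h2 : C - A = u * (omega0 ^ 2 - 1) + v * (omega0 - 1)) :
    triArea A B C = 3 * Real.sqrt 3 / 4 * |‖u‖ ^ 2 - ‖v‖ ^ 2| := by
  rw [triArea, h1, h2, keyIm, abs_mul, abs_of_nonneg (by positivity : (0:ℝ) ≤ 3 * Real.sqrt 3 / 2),
    abs_sub_comm]
  ring

lemma areaS (η η' a b c : ℂ) :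
    triArea (Sop η η' a b c).1 (Sop η η' a b c).2.1 (Sop η η' a b c).2.2
      = 3 * Real.sqrt 3 / 4 * |‖η' * psi1 a b c‖ ^ 2 - ‖η * psi2 a b c‖ ^ 2| := by
  apply area_of_diffs _ _ _ (η' * psi1 a b c) (η * psi2 a b c) <;> simp only [Sop] <;> ring

lemma areaOrig (a b c : ℂ) :
    triArea a b c = 3 * Real.sqrt 3 / 4 * |‖psi1 a b c‖ ^ 2 - ‖psi2 a b c‖ ^ 2| := by
  apply area_of_diffs _ _ _ (psi1 a b c) (psi2 a b c) <;> simp only [psi1, psi2]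
  · linear_combination ((b - a)/3) * omega0_sum + ((-2*b - c*omega0)/3) * omega0_cube
  · linear_combination ((c - a)/3) * omega0_sum + ((-b*omega0 - 2*c)/3) * omega0_cube

lemma psiA : psi1 1 omega0 (omega0^2) = 1 := by
  simp only [psi1]; linear_combination (2/3 : ℂ) * omega0_cube
lemma psiB : psi2 1 omega0 (omega0^2) = 0 := by
  simp only [psi2]; linear_combination (omega0/3) * omega0_cube + (1/3 : ℂ) * omega0_sum
lemma psiC : psi1 1 (omega0^2) omega0 = 0 := by
  simp only [psi1]; linear_combination (omega0/3) * omega0_cube + (1/3 : ℂ) * omega0_sum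
lemma psiD : psi2 1 (omega0^2) omega0 = 1 := by
  simp only [psi2]; linear_combination (2/3 : ℂ) * omega0_cube

theorem stmt_17 (η η' : ℂ) :
    (∀ a b c : ℂ, ‖psi1 a b c‖ ≠ ‖psi2 a b c‖ →
      triArea (Sop η η' a b c).1 (Sop η η' a b c).2.1 (Sop η η' a b c).2.2 / triArea a b c
        = |‖η' * psi1 a b c‖ ^ 2 - ‖η * psi2 a b c‖ ^ 2| /
          |‖psi1 a b c‖ ^ 2 - ‖psi2 a b c‖ ^ 2|) ∧
    ((∀ a b c : ℂ,
        triArea (Sop η η' a b c).1 (Sop η η' a b c).2.1 (Sop η η' a b c).2.2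
          = triArea a b c) ↔ ‖η‖ = 1 ∧ ‖η'‖ = 1) := by
  refine ⟨fun a b c _ => ?_, ?_, fun ⟨h1, h2⟩ a b c => ?_⟩
  · rw [areaS, areaOrig, mul_div_mul_left _ _ (ne_of_gt const_pos)]
  · intro h
    constructor
    · have h1 := h 1 (omega0^2) omega0
      rw [areaS, areaOrig, psiC, psiD] at h1
      simp only [mul_zero, mul_one, map_zero, map_one, norm_zero, norm_one] at h1
      have h2 := mul_left_cancel₀ (ne_of_gt const_pos) h1
      rw [show ((0:ℝ))^2 = 0 by norm_num, zero_sub, zero_sub, abs_neg, abs_neg,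
        abs_of_nonneg (sq_nonneg _)] at h2
      norm_num at h2
      rcases h2 with h2 | h2
      · exact h2
      · linarith [norm_nonneg η, h2]
    · have h1 := h 1 omega0 (omega0^2)
      rw [areaS, areaOrig, psiA, psiB] at h1
      simp only [mul_zero, mul_one, map_zero, map_one, norm_zero, norm_one] at h1
      have h2 := mul_left_cancel₀ (ne_of_gt const_pos) h1
      rw [show ((0:ℝ))^2 = 0 by norm_num, sub_zero, sub_zero,
        abs_of_nonneg (sq_nonneg _)] at h2
      norm_num at h2
      rcases h2 with h2 | h2
      · exact h2
      · linarith [norm_nonneg η', h2]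
  · rw [areaS, areaOrig, norm_mul, norm_mul, h1, h2, one_mul, one_mul]
end

section
/- With ρ = e^{πi/3}, define p(x,y) = ρ(xy+x+y)/(xy+2ρx+ρ²y) and q(x,y) = ρ⁻¹(xy-ρx-ρ⁻¹y)/(xy-2x+y). Then p(x,y) = q(ωx⁻¹, ω²x⁻¹y) and q(x,y) = p(ωx⁻¹, ω²x⁻¹y), where ω = ρ², whenever all expressions are defined. -/
theorem stmt_18 (ρ ω : ℂ)
    (hρ : ρ = Complex.exp (Real.pi * Complex.I / 3))
    (hω : ω = Complex.exp (2 * Real.pi * Complex.I / 3))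
    (x y : ℂ) (hx : x ≠ 0)
    (hd1 : x * y + 2 * ρ * x + ρ^2 * y ≠ 0)
    (hd2 : x * y - 2 * x + y ≠ 0)
    (hd3 : (ω * x⁻¹) * (ω^2 * x⁻¹ * y) + 2 * ρ * (ω * x⁻¹) + ρ^2 * (ω^2 * x⁻¹ * y) ≠ 0)
    (hd4 : (ω * x⁻¹) * (ω^2 * x⁻¹ * y) - 2 * (ω * x⁻¹) + (ω^2 * x⁻¹ * y) ≠ 0) :
    ρ * (x * y + x + y) / (x * y + 2 * ρ * x + ρ^2 * y)
      = ρ⁻¹ * ((ω * x⁻¹) * (ω^2 * x⁻¹ * y) - ρ * (ω * x⁻¹) - ρ⁻¹ * (ω^2 * x⁻¹ * y)) /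
          ((ω * x⁻¹) * (ω^2 * x⁻¹ * y) - 2 * (ω * x⁻¹) + (ω^2 * x⁻¹ * y)) ∧
    ρ⁻¹ * (x * y - ρ * x - ρ⁻¹ * y) / (x * y - 2 * x + y)
      = ρ * ((ω * x⁻¹) * (ω^2 * x⁻¹ * y) + (ω * x⁻¹) + (ω^2 * x⁻¹ * y)) /
          ((ω * x⁻¹) * (ω^2 * x⁻¹ * y) + 2 * ρ * (ω * x⁻¹) + ρ^2 * (ω^2 * x⁻¹ * y)) := by
  have hω2 : ω = ρ ^ 2 := by
    rw [hω, hρ, sq, ← Complex.exp_add]; ring_nf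
  have hrel : ρ ^ 2 - ρ + 1 = 0 := by
    have h : ρ = Complex.cos (Real.pi / 3) + Complex.sin (Real.pi / 3) * Complex.I := by
      rw [hρ, ← Complex.exp_mul_I]; ring_nf
    have hc : Complex.cos (Real.pi / 3) = 1 / 2 := by
      rw [show ((Real.pi : ℂ) / 3) = ((Real.pi / 3 : ℝ) : ℂ) by push_cast; ring,
        ← Complex.ofReal_cos, Real.cos_pi_div_three]; norm_num
    have hs : Complex.sin (Real.pi / 3) = (Real.sqrt 3) / 2 := by
      rw [show ((Real.pi : ℂ) / 3) = ((Real.pi / 3 : ℝ) : ℂ) by push_cast; ring,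
        ← Complex.ofReal_sin, Real.sin_pi_div_three]; push_cast; ring
    have h3 : ((Real.sqrt 3 : ℂ)) ^ 2 = 3 := by
      rw [← Complex.ofReal_pow, Real.sq_sqrt] <;> norm_num
    rw [h, hc, hs]
    ring_nf
    rw [Complex.I_sq]
    linear_combination (-(1 : ℂ) / 4) * h3
  have hρ0 : ρ ≠ 0 := by
    intro h; rw [h] at hrel; norm_num at hrel
  have hinv : ρ⁻¹ = 1 - ρ := by
    field_simp
    linear_combination hrel
  rw [hω2] at hd3 hd4 ⊢
  constructor
  · rw [div_eq_div_iff hd1 hd4, hinv]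
    field_simp
    ring_nf
    linear_combination ((-2 : ℂ) * x^1 * y^1 + (-2 : ℂ) * x^2 + (-1 : ℂ) * x^2 * y^1 + (-2 : ℂ) * ρ^1 * x^1 * y^1 + (-2 : ℂ) * ρ^1 * x^2 * y^1 + (1 : ℂ) * ρ^1 * x^2 * y^2 + (1 : ℂ) * ρ^2 * x^1 * y^1 + (1 : ℂ) * ρ^2 * x^1 * y^2 + (2 : ℂ) * ρ^2 * x^2 * y^1 + (2 : ℂ) * ρ^3 * x^1 * y^1 + (1 : ℂ) * ρ^3 * x^1 * y^2 + (1 : ℂ) * ρ^4 * y^2) * hrel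
  · rw [div_eq_div_iff hd2 hd3, hinv]
    field_simp
    ring_nf
    linear_combination ((-3 : ℂ) * x^1 * y^1 + (2 : ℂ) * x^2 + (1 : ℂ) * x^2 * y^1 + (1 : ℂ) * ρ^1 * x^1 * y^1 + (-1 : ℂ) * ρ^1 * x^2 * y^1 + (2 : ℂ) * ρ^2 * x^1 * y^1 + (-1 : ℂ) * ρ^2 * x^1 * y^2 + (-1 : ℂ) * ρ^2 * x^2 * y^2 + (-1 : ℂ) * ρ^3 * y^2 + (1 : ℂ) * ρ^3 * x^1 * y^1 + (-1 : ℂ) * ρ^3 * x^1 * y^2 + (1 : ℂ) * ρ^3 * x^2 * y^1) * hrel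
end

section
/- With ρ = e^{πi/3} and q(x,y) = ρ⁻¹(xy-ρx-ρ⁻¹y)/(xy-2x+y), for x, y on the unit circle (|x| = |y| = 1, (x,y) ≠ (1,1), denominators nonzero) one has q(x,y) + conj(q(x⁻¹, y⁻¹)) = 1, and q(y,x) = (q(x,y) - 1)/((1+ρ)q(x,y) - 1). -/
theorem stmt_19 (ρ : ℂ) (hρ : ρ = Complex.exp (Real.pi * Complex.I / 3))
    (q : ℂ → ℂ → ℂ)
    (hq : ∀ x y : ℂ, q x y = ρ⁻¹ * (x * y - ρ * x - ρ⁻¹ * y) / (x * y - 2 * x + y))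
    (x y : ℂ) (hx : ‖x‖ = 1) (hy : ‖y‖ = 1)
    (hxy : (x, y) ≠ ((1 : ℂ), (1 : ℂ)))
    (hd1 : x * y - 2 * x + y ≠ 0)
    (hd2 : x⁻¹ * y⁻¹ - 2 * x⁻¹ + y⁻¹ ≠ 0)
    (hd3 : y * x - 2 * y + x ≠ 0)
    (hd4 : (1 + ρ) * q x y - 1 ≠ 0) :
    q x y + (starRingEnd ℂ) (q x⁻¹ y⁻¹) = 1 ∧
    q y x = (q x y - 1) / ((1 + ρ) * q x y - 1) := by
  have hρ0 : ρ ≠ 0 := hρ ▸ Complex.exp_ne_zero _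
  have hρval : ρ = 1/2 + (Real.sqrt 3)/2 * Complex.I := by
    rw [hρ]
    have h : (Real.pi : ℂ) * Complex.I / 3 = ((Real.pi/3 : ℝ) : ℂ) * Complex.I := by
      push_cast; ring
    rw [h, Complex.exp_mul_I, ← Complex.ofReal_cos, ← Complex.ofReal_sin,
      Real.cos_pi_div_three, Real.sin_pi_div_three]
    push_cast; ring
  have h3c : (Real.sqrt 3 : ℂ)^2 = 3 := by
    norm_cast
    exact Real.sq_sqrt (by norm_num)
  have hρ2 : ρ^2 = ρ - 1 := by
    rw [hρval]
    linear_combination ((Real.sqrt 3:ℂ)^2/4) * Complex.I_sq - (1/4) * h3c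
  have hinv : ρ⁻¹ = 1 - ρ := by
    field_simp
    linear_combination hρ2
  have habsρ : ‖ρ‖ = 1 := by
    rw [hρ, Complex.norm_exp]
    norm_num [Complex.div_re, Complex.mul_re]
  have hx0 : x ≠ 0 := by intro h; rw [h] at hx; simp at hx
  have hy0 : y ≠ 0 := by intro h; rw [h] at hy; simp at hy
  have hcρ : (starRingEnd ℂ) ρ = ρ⁻¹ := (Complex.inv_eq_conj habsρ).symm
  have hcx : (starRingEnd ℂ) x = x⁻¹ := (Complex.inv_eq_conj hx).symm
  have hcy : (starRingEnd ℂ) y = y⁻¹ := (Complex.inv_eq_conj hy).symm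
  constructor
  · rw [hq, hq]
    simp only [map_div₀, map_sub, map_add, map_mul, map_inv₀, map_ofNat, hcρ, hcx, hcy, inv_inv]
    rw [hinv]
    have e1 : x * (y - 2) + y ≠ 0 := by rw [show x * (y - 2) + y = x * y - 2 * x + y by ring]; exact hd1
    field_simp
    ring_nf
    linear_combination (2*x - 2*y) * hρ2
  · rw [eq_div_iff hd4]
    rw [hq x y, hq y x, hinv]
    have e1 : x * (y - 2) + y ≠ 0 := by rw [show x * (y - 2) + y = x * y - 2 * x + y by ring]; exact hd1
    have e2 : y * (x - 2) + x ≠ 0 := by rw [show y * (x - 2) + x = y * x - 2 * y + x by ring]; exact hd3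
    field_simp
    ring_nf
    linear_combination ((-4)*y^2 + (8)*x^1*y^1 + (-4)*x^2 + (2)*ρ^1*y^2 + (-3)*ρ^1*x^1*y^1 + (-1)*ρ^1*x^1*y^2 + (2)*ρ^1*x^2 + (-1)*ρ^1*x^2*y^1 + (1)*ρ^1*x^2*y^2 + (1)*ρ^2*y^2 + (-2)*ρ^2*x^1*y^1 + (1)*ρ^2*x^2 + (-1)*ρ^3*y^2 + (2)*ρ^3*x^1*y^1 + (-1)*ρ^3*x^2) * hρ2
end
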